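/- With the b_Z = 0 system and integrals as in the paper, the Poisson bracket identity {X₁^a, X₁^c} = −2(X₃¹ − 2w₃)X₁^b + 2b_φw₁w₂ holds. -/

import Mathlib

noncomputable def pderiv (i : Fin 6) (F : (Fin 6 → ℝ) → ℝ) (q : Fin 6 → ℝ) : ℝ :=
  fderiv ℝ F q (Pi.single i 1)


lemma pderiv_coord (i j : Fin 6) (q : Fin 6 → ℝ) :
    pderiv i (fun q => q j) q = if j = i then 1 else 0 := by
  have h : (fun q : Fin 6 → ℝ => q j) = (ContinuousLinearMap.proj j : (Fin 6 → ℝ) →L[ℝ] ℝ) := rfl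
  rw [pderiv, h, ContinuousLinearMap.fderiv]
  simp [Pi.single_apply]

lemma pderiv_const (i : Fin 6) (c : ℝ) (q : Fin 6 → ℝ) : pderiv i (fun _ => c) q = 0 := by
  simp [pderiv]

lemma pderiv_add (i : Fin 6) {F G : (Fin 6 → ℝ) → ℝ} (q : Fin 6 → ℝ)
    (hF : DifferentiableAt ℝ F q) (hG : DifferentiableAt ℝ G q) :
    pderiv i (fun q => F q + G q) q = pderiv i F q + pderiv i G q := by
  simp [pderiv, fderiv_fun_add hF hG]

lemma pderiv_sub (i : Fin 6) {F G : (Fin 6 → ℝ) → ℝ} (q : Fin 6 → ℝ)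
    (hF : DifferentiableAt ℝ F q) (hG : DifferentiableAt ℝ G q) :
    pderiv i (fun q => F q - G q) q = pderiv i F q - pderiv i G q := by
  simp [pderiv, fderiv_fun_sub hF hG]

lemma pderiv_mul (i : Fin 6) {F G : (Fin 6 → ℝ) → ℝ} (q : Fin 6 → ℝ)
    (hF : DifferentiableAt ℝ F q) (hG : DifferentiableAt ℝ G q) :
    pderiv i (fun q => F q * G q) q = pderiv i F q * G q + F q * pderiv i G q := by
  simp [pderiv, fderiv_fun_mul hF hG]; ring

/-- Canonical Poisson bracket on phase space ℝ⁶: coordinates `q 0, q 1, q 2` are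
positions and `q 3, q 4, q 5` are momenta. -/
noncomputable def poisson (F G : (Fin 6 → ℝ) → ℝ) (q : Fin 6 → ℝ) : ℝ :=
  ∑ k : Fin 3, (pderiv (Fin.castAdd 3 k) F q * pderiv (Fin.natAdd 3 k) G q
    - pderiv (Fin.castAdd 3 k) G q * pderiv (Fin.natAdd 3 k) F q)

/-- squared planar radius -/
noncomputable def r2 (q : Fin 6 → ℝ) : ℝ := (q 0)^2 + (q 1)^2

/-- covariant momentum p₃ + A₃ with A₃ = -(1/2) bφ (x²+y²) -/
noncomputable def P3A (bφ : ℝ) (q : Fin 6 → ℝ) : ℝ := q 5 - (1/2)*bφ*r2 q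

/-- covariant angular momentum l₃^A = x p₂ - y p₁ (here A₁ = A₂ = 0) -/
noncomputable def L3A (q : Fin 6 → ℝ) : ℝ := q 0 * q 4 - q 1 * q 3

/-- Hamiltonian of the b_Z = 0 system -/
noncomputable def Ham (bφ w₁ w₂ w₃ : ℝ) (q : Fin 6 → ℝ) : ℝ :=
  (1/2)*((q 3)^2 + (q 4)^2 + (P3A bφ q)^2)
    - (1/8)*bφ^2*(r2 q)^2 + bφ*(w₃*r2 q + w₁*q 0 + w₂*q 1)

noncomputable def X1a (bφ w₁ w₃ : ℝ) (q : Fin 6 → ℝ) : ℝ :=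
  (q 3)^2 - bφ*(q 0)^2*P3A bφ q - (1/2)*bφ^2*(q 0)^2*r2 q
    + 2*bφ*w₃*(q 0)^2 + 2*bφ*w₁*q 0

noncomputable def X1b (bφ w₁ w₂ w₃ : ℝ) (q : Fin 6 → ℝ) : ℝ :=
  q 3 * q 4 - bφ*q 0*q 1*P3A bφ q - (1/2)*bφ^2*q 0*q 1*r2 q
    + 2*bφ*w₃*q 0*q 1 + bφ*w₂*q 0 + bφ*w₁*q 1

noncomputable def X1c (bφ w₁ w₂ w₃ sZ3 : ℝ) (q : Fin 6 → ℝ) : ℝ :=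
  L3A q * P3A bφ q + w₂*q 3 - w₁*q 4 + ((1/2)*bφ*r2 q - 2*w₃)*L3A q
    + sZ3*P3A bφ q + (1/2)*bφ*sZ3*r2 q

/-- first--order integral X₃¹ = p₃ -/
noncomputable def X31 (q : Fin 6 → ℝ) : ℝ := q 5

set_option maxHeartbeats 4000000 in
/-- `{X₁^a, X₁^c} = -2(X₃¹ - 2w₃)X₁^b + 2b_φw₁w₂`. -/
theorem poisson_X1a_X1c (bφ w₁ w₂ w₃ sZ3 : ℝ) :
    ∀ q : Fin 6 → ℝ,
      poisson (X1a bφ w₁ w₃) (X1c bφ w₁ w₂ w₃ sZ3) q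
        = -2*(X31 q - 2*w₃) * X1b bφ w₁ w₂ w₃ q + 2*bφ*w₁*w₂ := by
  intro q
  simp only [poisson, Fin.sum_univ_three]
  simp only [show (Fin.castAdd 3 (0:Fin 3)) = (0:Fin 6) from rfl,
    show (Fin.castAdd 3 (1:Fin 3)) = (1:Fin 6) from rfl,
    show (Fin.castAdd 3 (2:Fin 3)) = (2:Fin 6) from rfl,
    show (Fin.natAdd 3 (0:Fin 3)) = (3:Fin 6) from rfl,
    show (Fin.natAdd 3 (1:Fin 3)) = (4:Fin 6) from rfl,
    show (Fin.natAdd 3 (2:Fin 3)) = (5:Fin 6) from rfl]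
  unfold X1a X1c X1b X31 L3A P3A r2
  simp only [pow_two]
  simp (disch := fun_prop) only [pderiv_add, pderiv_sub, pderiv_mul, pderiv_coord, pderiv_const]
  simp (config := { decide := true }) only [reduceIte]
  ring
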